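/- Let (X, d, μ) be a metric measure space satisfying the doubling condition. For any ε > 0 and any R > 0 there exist constants c₁, c₂ > 0 (depending on ε and R but not on x or r) such that c₁ r^{M(μB_x)+ε} ≤ μB(x,r) ≤ c₂ r^{m(μB_x)−ε} for all 0 < r ≤ R and all x ∈ X, where m(μB_x) and M(μB_x) are the local lower and upper dimensions of μ at x. -/
import Mathlib


open Filter MeasureTheory Set

variable {X : Type*}

/-- Local lower dimension `m(μB_x)` of a measure at the point `x`. -/
noncomputable def localLowerDim [MetricSpace X] [MeasurableSpace X]
    (μ : Measure X) (x : X) : ℝ :=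
  sSup {y | ∃ t : ℝ, 1 < t ∧ y =
    Real.log (Filter.liminf
      (fun r => (μ (Metric.ball x (r * t))).toReal / (μ (Metric.ball x r)).toReal)
      (nhdsWithin 0 (Set.Ioi 0))) / Real.log t}

/-- Local upper dimension `M(μB_x)` of a measure at the point `x`. -/
noncomputable def localUpperDim [MetricSpace X] [MeasurableSpace X]
    (μ : Measure X) (x : X) : ℝ :=
  sInf {y | ∃ t : ℝ, 1 < t ∧ y =
    Real.log (Filter.limsup
      (fun r => (μ (Metric.ball x (r * t))).toReal / (μ (Metric.ball x r)).toReal)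
      (nhdsWithin 0 (Set.Ioi 0))) / Real.log t}


/-- Iteration lemma, lower-bound direction: if the measure grows by at least `t^s`
when the radius is multiplied by `t` (for small radii), then `f r ≤ c * r^s`. -/
lemma keyUp {f : ℝ → ℝ} (hmono : ∀ ⦃a b : ℝ⦄, 0 < a → a ≤ b → f a ≤ f b)
    (hpos : ∀ r : ℝ, 0 < r → 0 < f r) {t s r₀ R : ℝ} (ht : 1 < t) (hs : 0 < s)
    (hr₀ : 0 < r₀) (hR : 0 < R)
    (h : ∀ r : ℝ, 0 < r → r ≤ r₀ → t ^ s * f r ≤ f (r * t)) :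
    ∃ c > (0:ℝ), ∀ r : ℝ, 0 < r → r ≤ R → f r ≤ c * r ^ s := by
  classical
  have ht0 : (0:ℝ) < t := lt_trans one_pos ht
  have step : ∀ r : ℝ, 0 < r → ∀ k : ℕ, (∀ i < k, r * t ^ i ≤ r₀) →
      (t ^ s) ^ k * f r ≤ f (r * t ^ k) := by
    intro r hr k
    induction k with
    | zero => intro _; simp
    | succ k ih =>
      intro hcond
      have h1 : (t ^ s) ^ k * f r ≤ f (r * t ^ k) :=
        ih (fun i hi => hcond i (Nat.lt_succ_of_lt hi))
      have hrtk : 0 < r * t ^ k := mul_pos hr (pow_pos ht0 k)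
      have h2 : t ^ s * f (r * t ^ k) ≤ f (r * t ^ k * t) :=
        h _ hrtk (hcond k (Nat.lt_succ_self k))
      calc (t ^ s) ^ (k + 1) * f r = t ^ s * ((t ^ s) ^ k * f r) := by ring
        _ ≤ t ^ s * f (r * t ^ k) :=
            mul_le_mul_of_nonneg_left h1 (Real.rpow_nonneg ht0.le s)
        _ ≤ f (r * t ^ k * t) := h2
        _ = f (r * t ^ (k + 1)) := by rw [pow_succ, ← mul_assoc]
  have hr0s : (0:ℝ) < r₀ ^ s := Real.rpow_pos_of_pos hr₀ s
  set c₁ : ℝ := f (r₀ * t) / r₀ ^ s with hc1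
  set c₂ : ℝ := f R / r₀ ^ s with hc2
  have hc1pos : 0 < c₁ := div_pos (hpos _ (mul_pos hr₀ ht0)) hr0s
  refine ⟨max c₁ c₂, lt_max_iff.2 (Or.inl hc1pos), ?_⟩
  intro r hr hrR
  have hrs : (0:ℝ) < r ^ s := Real.rpow_pos_of_pos hr s
  rcases le_or_gt r r₀ with hcase | hcase
  · have hex : ∃ k : ℕ, r₀ < r * t ^ k := by
      obtain ⟨k, hk⟩ := pow_unbounded_of_one_lt (r₀ / r) ht
      exact ⟨k, by rw [mul_comm]; exact (div_lt_iff₀ hr).1 hk⟩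
    set k := Nat.find hex with hkdef
    have hk : r₀ < r * t ^ k := Nat.find_spec hex
    have hmin : ∀ i < k, r * t ^ i ≤ r₀ := fun i hi => not_lt.1 (Nat.find_min hex hi)
    have hk0 : k ≠ 0 := by
      intro h0
      rw [h0] at hk
      simp only [pow_zero, mul_one] at hk
      linarith
    obtain ⟨j, hj⟩ := Nat.exists_eq_succ_of_ne_zero hk0
    have hrtk_le : r * t ^ k ≤ r₀ * t := by
      have hj' : r * t ^ j ≤ r₀ := hmin j (by omega)
      calc r * t ^ k = r * t ^ j * t := by rw [hj, pow_succ, ← mul_assoc]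
        _ ≤ r₀ * t := mul_le_mul_of_nonneg_right hj' ht0.le
    have h1 : (t ^ s) ^ k * f r ≤ f (r₀ * t) :=
      (step r hr k hmin).trans (hmono (mul_pos hr (pow_pos ht0 k)) hrtk_le)
    have heq : (t ^ s) ^ k = ((t : ℝ) ^ k) ^ s := by
      rw [← Real.rpow_natCast (t ^ s) k, ← Real.rpow_mul ht0.le, mul_comm,
        Real.rpow_mul ht0.le, Real.rpow_natCast]
    have htk : r₀ / r ≤ t ^ k :=
      le_of_lt ((div_lt_iff₀ hr).2 (by rw [mul_comm]; exact hk))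
    have h2 : (r₀ / r) ^ s * f r ≤ f (r₀ * t) := by
      refine le_trans (mul_le_mul_of_nonneg_right ?_ (hpos r hr).le) h1
      rw [heq]
      exact Real.rpow_le_rpow (by positivity) htk hs.le
    have hdiv : (r₀ / r) ^ s = r₀ ^ s / r ^ s := Real.div_rpow hr₀.le hr.le s
    rw [hdiv] at h2
    have hmain : f r ≤ c₁ * r ^ s := by
      rw [hc1, div_mul_eq_mul_div, le_div_iff₀ hr0s]
      rw [div_mul_eq_mul_div, div_le_iff₀ hrs] at h2
      nlinarith [h2]
    exact hmain.trans (mul_le_mul_of_nonneg_right (le_max_left _ _) hrs.le)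
  · have h1 : f r ≤ f R := hmono hr hrR
    have h2 : r₀ ^ s ≤ r ^ s := Real.rpow_le_rpow hr₀.le hcase.le hs.le
    have hmain : f r ≤ c₂ * r ^ s := by
      calc f r ≤ f R := h1
        _ = f R / r₀ ^ s * r₀ ^ s := (div_mul_cancel₀ _ hr0s.ne').symm
        _ ≤ c₂ * r ^ s := mul_le_mul_of_nonneg_left h2 (div_pos (hpos R hR) hr0s).le
    exact hmain.trans (mul_le_mul_of_nonneg_right (le_max_right _ _) hrs.le)

/-- Iteration lemma, upper-bound direction: if the measure grows by at most `t^s`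
when the radius is multiplied by `t` (for small radii), then `c * r^s ≤ f r`. -/
lemma keyLow {f : ℝ → ℝ} (hmono : ∀ ⦃a b : ℝ⦄, 0 < a → a ≤ b → f a ≤ f b)
    (hpos : ∀ r : ℝ, 0 < r → 0 < f r) {t s r₀ R : ℝ} (ht : 1 < t) (hs : 0 < s)
    (hr₀ : 0 < r₀) (hR : 0 < R)
    (h : ∀ r : ℝ, 0 < r → r ≤ r₀ → f (r * t) ≤ t ^ s * f r) :
    ∃ c > (0:ℝ), ∀ r : ℝ, 0 < r → r ≤ R → c * r ^ s ≤ f r := by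
  classical
  have ht0 : (0:ℝ) < t := lt_trans one_pos ht
  have step : ∀ r : ℝ, 0 < r → ∀ k : ℕ, (∀ i < k, r * t ^ i ≤ r₀) →
      f (r * t ^ k) ≤ (t ^ s) ^ k * f r := by
    intro r hr k
    induction k with
    | zero => intro _; simp
    | succ k ih =>
      intro hcond
      have h1 : f (r * t ^ k) ≤ (t ^ s) ^ k * f r :=
        ih (fun i hi => hcond i (Nat.lt_succ_of_lt hi))
      have hrtk : 0 < r * t ^ k := mul_pos hr (pow_pos ht0 k)
      have h2 : f (r * t ^ k * t) ≤ t ^ s * f (r * t ^ k) :=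
        h _ hrtk (hcond k (Nat.lt_succ_self k))
      calc f (r * t ^ (k + 1)) = f (r * t ^ k * t) := by rw [pow_succ, ← mul_assoc]
        _ ≤ t ^ s * f (r * t ^ k) := h2
        _ ≤ t ^ s * ((t ^ s) ^ k * f r) :=
            mul_le_mul_of_nonneg_left h1 (Real.rpow_nonneg ht0.le s)
        _ = (t ^ s) ^ (k + 1) * f r := by ring
  have hRs : (0:ℝ) < R ^ s := Real.rpow_pos_of_pos hR s
  have hr0ts : (0:ℝ) < (r₀ * t) ^ s := Real.rpow_pos_of_pos (mul_pos hr₀ ht0) s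
  set c₁ : ℝ := f r₀ / (r₀ * t) ^ s with hc1
  set c₂ : ℝ := f r₀ / R ^ s with hc2
  have hc1pos : 0 < c₁ := div_pos (hpos _ hr₀) hr0ts
  have hc2pos : 0 < c₂ := div_pos (hpos _ hr₀) hRs
  refine ⟨min c₁ c₂, lt_min hc1pos hc2pos, ?_⟩
  intro r hr hrR
  have hrs : (0:ℝ) < r ^ s := Real.rpow_pos_of_pos hr s
  rcases le_or_gt r r₀ with hcase | hcase
  · have hex : ∃ k : ℕ, r₀ < r * t ^ k := by
      obtain ⟨k, hk⟩ := pow_unbounded_of_one_lt (r₀ / r) ht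
      exact ⟨k, by rw [mul_comm]; exact (div_lt_iff₀ hr).1 hk⟩
    set k := Nat.find hex with hkdef
    have hk : r₀ < r * t ^ k := Nat.find_spec hex
    have hmin : ∀ i < k, r * t ^ i ≤ r₀ := fun i hi => not_lt.1 (Nat.find_min hex hi)
    have hk0 : k ≠ 0 := by
      intro h0
      rw [h0] at hk
      simp only [pow_zero, mul_one] at hk
      linarith
    obtain ⟨j, hj⟩ := Nat.exists_eq_succ_of_ne_zero hk0
    have htk_le : (t : ℝ) ^ k ≤ r₀ / r * t := by
      have hj' : r * t ^ j ≤ r₀ := hmin j (by omega)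
      have hj'' : t ^ j ≤ r₀ / r := (le_div_iff₀ hr).2 (by rw [mul_comm]; exact hj')
      calc (t : ℝ) ^ k = t ^ j * t := by rw [hj, pow_succ]
        _ ≤ r₀ / r * t := mul_le_mul_of_nonneg_right hj'' ht0.le
    have h1 : f r₀ ≤ (t ^ s) ^ k * f r :=
      le_trans (hmono hr₀ hk.le) (step r hr k hmin)
    have heq : (t ^ s) ^ k = ((t : ℝ) ^ k) ^ s := by
      rw [← Real.rpow_natCast (t ^ s) k, ← Real.rpow_mul ht0.le, mul_comm,
        Real.rpow_mul ht0.le, Real.rpow_natCast]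
    have h2 : f r₀ ≤ (r₀ / r * t) ^ s * f r := by
      refine h1.trans (mul_le_mul_of_nonneg_right ?_ (hpos r hr).le)
      rw [heq]
      exact Real.rpow_le_rpow (by positivity) htk_le hs.le
    have hdiv : (r₀ / r * t) ^ s = (r₀ * t) ^ s / r ^ s := by
      rw [div_mul_eq_mul_div, Real.div_rpow (by positivity) hr.le]
    rw [hdiv] at h2
    have hmain : c₁ * r ^ s ≤ f r := by
      rw [hc1, div_mul_eq_mul_div, div_le_iff₀ hr0ts]
      rw [div_mul_eq_mul_div, le_div_iff₀ hrs] at h2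
      nlinarith [h2]
    exact le_trans (mul_le_mul_of_nonneg_right (min_le_left _ _) hrs.le) hmain
  · have h1 : f r₀ ≤ f r := hmono hr₀ hcase.le
    have h2 : r ^ s ≤ R ^ s := Real.rpow_le_rpow hr.le hrR hs.le
    have hmain : c₂ * r ^ s ≤ f r := by
      calc c₂ * r ^ s ≤ c₂ * R ^ s := mul_le_mul_of_nonneg_left h2 hc2pos.le
        _ = f r₀ := div_mul_cancel₀ _ hRs.ne'
        _ ≤ f r := h1
    exact le_trans (mul_le_mul_of_nonneg_right (min_le_right _ _) hrs.le) hmain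

/-- On a doubling metric measure space, for every `ε > 0` and `R > 0` there are
`c₁, c₂ > 0` with `c₁ r^{M(μB_x)+ε} ≤ μB(x,r) ≤ c₂ r^{m(μB_x)-ε}` for `0 < r ≤ R`. -/
theorem ball_measure_dimension_bounds [MetricSpace X] [MeasurableSpace X]
    (μ : Measure X) (C : ℝ) (hC : 0 < C)
    (hdouble : ∀ (x : X) (r : ℝ), 0 < r →
      μ (Metric.ball x (2 * r)) ≤ ENNReal.ofReal C * μ (Metric.ball x r))
    (hpos : ∀ (x : X) (r : ℝ), 0 < r → 0 < μ (Metric.ball x r))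
    (hfin : ∀ (x : X) (r : ℝ), μ (Metric.ball x r) ≠ ⊤)
    (x : X) (ε R : ℝ) (hε : 0 < ε) (hR : 0 < R) :
    ∃ c₁ > (0 : ℝ), ∃ c₂ > (0 : ℝ), ∀ r ∈ Set.Ioc (0 : ℝ) R,
      c₁ * r ^ (localUpperDim μ x + ε) ≤ (μ (Metric.ball x r)).toReal ∧
      (μ (Metric.ball x r)).toReal ≤ c₂ * r ^ (localLowerDim μ x - ε) := by
  classical
  have hmono : ∀ ⦃a b : ℝ⦄, 0 < a → a ≤ b →
      (μ (Metric.ball x a)).toReal ≤ (μ (Metric.ball x b)).toReal := fun a b _ hab =>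
    ENNReal.toReal_mono (hfin x b) (measure_mono (Metric.ball_subset_ball hab))
  have hFpos : ∀ r : ℝ, 0 < r → 0 < (μ (Metric.ball x r)).toReal := fun r hr =>
    ENNReal.toReal_pos (hpos x r hr).ne' (hfin x r)
  have hdouble2 : ∀ (k : ℕ) (r : ℝ), 0 < r →
      μ (Metric.ball x (2 ^ k * r)) ≤ (ENNReal.ofReal C) ^ k * μ (Metric.ball x r) := by
    intro k
    induction k with
    | zero => intro r _; simp
    | succ k ih =>
      intro r hr
      calc μ (Metric.ball x (2 ^ (k + 1) * r)) = μ (Metric.ball x (2 * (2 ^ k * r))) := by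
            rw [← mul_assoc, ← pow_succ']
        _ ≤ ENNReal.ofReal C * μ (Metric.ball x (2 ^ k * r)) := hdouble x _ (by positivity)
        _ ≤ ENNReal.ofReal C * ((ENNReal.ofReal C) ^ k * μ (Metric.ball x r)) :=
            mul_le_mul_right (ih r hr) _
        _ = (ENNReal.ofReal C) ^ (k + 1) * μ (Metric.ball x r) := by ring
  have hK : ∀ t : ℝ, 1 < t → ∃ K : ℝ, ∀ r : ℝ, 0 < r →
      (μ (Metric.ball x (r * t))).toReal ≤ K * (μ (Metric.ball x r)).toReal := by
    intro t ht
    obtain ⟨k, hk⟩ := pow_unbounded_of_one_lt t (one_lt_two (α := ℝ))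
    refine ⟨C ^ k, fun r hr => ?_⟩
    have h1 : μ (Metric.ball x (r * t)) ≤ μ (Metric.ball x (2 ^ k * r)) :=
      measure_mono (Metric.ball_subset_ball
        (by rw [mul_comm]; exact mul_le_mul_of_nonneg_right hk.le hr.le))
    have hfin2 : (ENNReal.ofReal C) ^ k * μ (Metric.ball x r) ≠ ⊤ :=
      ENNReal.mul_ne_top (ENNReal.pow_ne_top ENNReal.ofReal_ne_top) (hfin x r)
    have h3 := ENNReal.toReal_mono hfin2 (h1.trans (hdouble2 k r hr))
    rwa [ENNReal.toReal_mul, ENNReal.toReal_pow, ENNReal.toReal_ofReal hC.le] at h3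
  have hratio : ∀ t : ℝ, 1 < t →
      (∀ᶠ r in nhdsWithin (0:ℝ) (Set.Ioi 0),
        1 ≤ (μ (Metric.ball x (r * t))).toReal / (μ (Metric.ball x r)).toReal)
      ∧ ∃ K : ℝ, ∀ᶠ r in nhdsWithin (0:ℝ) (Set.Ioi 0),
          (μ (Metric.ball x (r * t))).toReal / (μ (Metric.ball x r)).toReal ≤ K := by
    intro t ht
    obtain ⟨K, hKle⟩ := hK t ht
    refine ⟨?_, K, ?_⟩
    · filter_upwards [self_mem_nhdsWithin] with r hr
      exact (one_le_div (hFpos r hr)).2 (hmono hr (le_mul_of_one_le_right hr.le ht.le))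
    · filter_upwards [self_mem_nhdsWithin] with r hr
      exact (div_le_iff₀ (hFpos r hr)).2 (hKle r hr)
  have hrpow_log : ∀ t L : ℝ, 1 < t → 0 < L → t ^ (Real.log L / Real.log t) = L := by
    intro t L ht hL
    rw [Real.rpow_def_of_pos (lt_trans one_pos ht), mul_comm,
      div_mul_cancel₀ _ (Real.log_pos ht).ne', Real.exp_log hL]
  -- upper bound on the measure (constant c₂)
  have hupper : ∃ c₂ > (0:ℝ), ∀ r ∈ Set.Ioc (0:ℝ) R,
      (μ (Metric.ball x r)).toReal ≤ c₂ * r ^ (localLowerDim μ x - ε) := by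
    set m := localLowerDim μ x with hm
    rcases le_or_gt (m - ε) 0 with hcase | hcase
    · refine ⟨(μ (Metric.ball x R)).toReal / R ^ (m - ε),
        div_pos (hFpos R hR) (Real.rpow_pos_of_pos hR _), ?_⟩
      intro r hr
      have h2 : R ^ (m - ε) ≤ r ^ (m - ε) := Real.rpow_le_rpow_of_nonpos hr.1 hr.2 hcase
      calc (μ (Metric.ball x r)).toReal ≤ (μ (Metric.ball x R)).toReal := hmono hr.1 hr.2
        _ = (μ (Metric.ball x R)).toReal / R ^ (m - ε) * R ^ (m - ε) :=
            (div_mul_cancel₀ _ (Real.rpow_pos_of_pos hR _).ne').symm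
        _ ≤ _ := mul_le_mul_of_nonneg_left h2
            (div_pos (hFpos R hR) (Real.rpow_pos_of_pos hR _)).le
    · have hSne : {y | ∃ t : ℝ, 1 < t ∧ y = Real.log (Filter.liminf
          (fun r => (μ (Metric.ball x (r * t))).toReal / (μ (Metric.ball x r)).toReal)
          (nhdsWithin 0 (Set.Ioi 0))) / Real.log t}.Nonempty := ⟨_, ⟨2, one_lt_two, rfl⟩⟩
      have hSS : sSup {y | ∃ t : ℝ, 1 < t ∧ y = Real.log (Filter.liminf
          (fun r => (μ (Metric.ball x (r * t))).toReal / (μ (Metric.ball x r)).toReal)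
          (nhdsWithin 0 (Set.Ioi 0))) / Real.log t} = m := by rw [hm]; rfl
      obtain ⟨y, hyS, hym⟩ := exists_lt_of_lt_csSup hSne
        (show m - ε / 2 < _ by rw [hSS]; linarith)
      obtain ⟨t, ht, hy⟩ := hyS
      obtain ⟨hone, K, hub⟩ := hratio t ht
      have hbddle : Filter.IsBoundedUnder (· ≤ ·) (nhdsWithin (0:ℝ) (Set.Ioi 0))
          (fun r => (μ (Metric.ball x (r * t))).toReal / (μ (Metric.ball x r)).toReal) :=
        ⟨K, eventually_map.mpr hub⟩
      have hbddge : Filter.IsBoundedUnder (· ≥ ·) (nhdsWithin (0:ℝ) (Set.Ioi 0))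
          (fun r => (μ (Metric.ball x (r * t))).toReal / (μ (Metric.ball x r)).toReal) :=
        ⟨1, eventually_map.mpr hone⟩
      have hL1 : 1 ≤ Filter.liminf
          (fun r => (μ (Metric.ball x (r * t))).toReal / (μ (Metric.ball x r)).toReal)
          (nhdsWithin (0:ℝ) (Set.Ioi 0)) :=
        le_liminf_of_le hbddle.isCoboundedUnder_ge hone
      have hty : t ^ y = Filter.liminf
          (fun r => (μ (Metric.ball x (r * t))).toReal / (μ (Metric.ball x r)).toReal)
          (nhdsWithin (0:ℝ) (Set.Ioi 0)) := by
        rw [hy]; exact hrpow_log t _ ht (lt_of_lt_of_le one_pos hL1)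
      have hslt : t ^ (y - ε / 2) < Filter.liminf
          (fun r => (μ (Metric.ball x (r * t))).toReal / (μ (Metric.ball x r)).toReal)
          (nhdsWithin (0:ℝ) (Set.Ioi 0)) := by
        rw [← hty]; exact Real.rpow_lt_rpow_of_exponent_lt ht (by linarith)
      have hev := eventually_lt_of_lt_liminf hslt hbddge
      rw [Filter.eventually_iff] at hev
      obtain ⟨r₀, hr₀mem, hsub⟩ := mem_nhdsGT_iff_exists_Ioc_subset.1 hev
      have hkey : ∀ r : ℝ, 0 < r → r ≤ r₀ →
          t ^ (y - ε / 2) * (μ (Metric.ball x r)).toReal ≤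
            (μ (Metric.ball x (r * t))).toReal := by
        intro r hr hrle
        have h4 : t ^ (y - ε / 2) <
            (μ (Metric.ball x (r * t))).toReal / (μ (Metric.ball x r)).toReal :=
          hsub ⟨hr, hrle⟩
        exact le_of_lt ((lt_div_iff₀ (hFpos r hr)).1 h4)
      obtain ⟨c, hc, hcle⟩ := keyUp hmono hFpos ht
        (show (0:ℝ) < y - ε / 2 by linarith) hr₀mem hR hkey
      refine ⟨c * R ^ (y - ε / 2 - (m - ε)), by positivity, ?_⟩
      intro r hr
      have h1 := hcle r hr.1 hr.2
      have h2 : r ^ (y - ε / 2) ≤ R ^ (y - ε / 2 - (m - ε)) * r ^ (m - ε) := by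
        have heq : r ^ (y - ε / 2) = r ^ (y - ε / 2 - (m - ε)) * r ^ (m - ε) := by
          rw [← Real.rpow_add hr.1]; congr 1; ring
        rw [heq]
        exact mul_le_mul_of_nonneg_right
          (Real.rpow_le_rpow hr.1.le hr.2 (by linarith))
          (Real.rpow_pos_of_pos hr.1 _).le
      calc (μ (Metric.ball x r)).toReal ≤ c * r ^ (y - ε / 2) := h1
        _ ≤ c * (R ^ (y - ε / 2 - (m - ε)) * r ^ (m - ε)) :=
            mul_le_mul_of_nonneg_left h2 hc.le
        _ = c * R ^ (y - ε / 2 - (m - ε)) * r ^ (m - ε) := by ring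
  -- lower bound on the measure (constant c₁)
  have hlower : ∃ c₁ > (0:ℝ), ∀ r ∈ Set.Ioc (0:ℝ) R,
      c₁ * r ^ (localUpperDim μ x + ε) ≤ (μ (Metric.ball x r)).toReal := by
    set M := localUpperDim μ x with hM
    have hSne : {y | ∃ t : ℝ, 1 < t ∧ y = Real.log (Filter.limsup
        (fun r => (μ (Metric.ball x (r * t))).toReal / (μ (Metric.ball x r)).toReal)
        (nhdsWithin 0 (Set.Ioi 0))) / Real.log t}.Nonempty := ⟨_, ⟨2, one_lt_two, rfl⟩⟩
    have hSS : sInf {y | ∃ t : ℝ, 1 < t ∧ y = Real.log (Filter.limsup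
        (fun r => (μ (Metric.ball x (r * t))).toReal / (μ (Metric.ball x r)).toReal)
        (nhdsWithin 0 (Set.Ioi 0))) / Real.log t} = M := by rw [hM]; rfl
    obtain ⟨y, hyS, hyM⟩ := exists_lt_of_csInf_lt hSne
      (show _ < M + ε / 2 by rw [hSS]; linarith)
    obtain ⟨t, ht, hy⟩ := hyS
    obtain ⟨hone, K, hub⟩ := hratio t ht
    have hbddle : Filter.IsBoundedUnder (· ≤ ·) (nhdsWithin (0:ℝ) (Set.Ioi 0))
        (fun r => (μ (Metric.ball x (r * t))).toReal / (μ (Metric.ball x r)).toReal) :=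
      ⟨K, eventually_map.mpr hub⟩
    have hL1 : 1 ≤ Filter.limsup
        (fun r => (μ (Metric.ball x (r * t))).toReal / (μ (Metric.ball x r)).toReal)
        (nhdsWithin (0:ℝ) (Set.Ioi 0)) :=
      le_limsup_of_frequently_le hone.frequently hbddle
    have hy0 : 0 ≤ y := by
      rw [hy]; exact div_nonneg (Real.log_nonneg hL1) (Real.log_pos ht).le
    have hty : t ^ y = Filter.limsup
        (fun r => (μ (Metric.ball x (r * t))).toReal / (μ (Metric.ball x r)).toReal)
        (nhdsWithin (0:ℝ) (Set.Ioi 0)) := by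
      rw [hy]; exact hrpow_log t _ ht (lt_of_lt_of_le one_pos hL1)
    have hslt : Filter.limsup
        (fun r => (μ (Metric.ball x (r * t))).toReal / (μ (Metric.ball x r)).toReal)
        (nhdsWithin (0:ℝ) (Set.Ioi 0)) < t ^ (y + ε / 2) := by
      rw [← hty]; exact Real.rpow_lt_rpow_of_exponent_lt ht (by linarith)
    have hev := eventually_lt_of_limsup_lt hslt hbddle
    rw [Filter.eventually_iff] at hev
    obtain ⟨r₀, hr₀mem, hsub⟩ := mem_nhdsGT_iff_exists_Ioc_subset.1 hev
    have hkey : ∀ r : ℝ, 0 < r → r ≤ r₀ →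
        (μ (Metric.ball x (r * t))).toReal ≤
          t ^ (y + ε / 2) * (μ (Metric.ball x r)).toReal := by
      intro r hr hrle
      have h4 : (μ (Metric.ball x (r * t))).toReal / (μ (Metric.ball x r)).toReal <
          t ^ (y + ε / 2) := hsub ⟨hr, hrle⟩
      exact le_of_lt ((div_lt_iff₀ (hFpos r hr)).1 h4)
    obtain ⟨c, hc, hcle⟩ := keyLow hmono hFpos ht
      (show (0:ℝ) < y + ε / 2 by linarith) hr₀mem hR hkey
    have hRd : (0:ℝ) < R ^ (M + ε - (y + ε / 2)) := Real.rpow_pos_of_pos hR _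
    refine ⟨c / R ^ (M + ε - (y + ε / 2)), by positivity, ?_⟩
    intro r hr
    have h1 := hcle r hr.1 hr.2
    have h2 : r ^ (M + ε) ≤ r ^ (y + ε / 2) * R ^ (M + ε - (y + ε / 2)) := by
      have heq : r ^ (M + ε) = r ^ (y + ε / 2) * r ^ (M + ε - (y + ε / 2)) := by
        rw [← Real.rpow_add hr.1]; congr 1; ring
      rw [heq]
      exact mul_le_mul_of_nonneg_left
        (Real.rpow_le_rpow hr.1.le hr.2 (by linarith))
        (Real.rpow_pos_of_pos hr.1 _).le
    calc c / R ^ (M + ε - (y + ε / 2)) * r ^ (M + ε)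
        ≤ c / R ^ (M + ε - (y + ε / 2)) * (r ^ (y + ε / 2) * R ^ (M + ε - (y + ε / 2))) :=
          mul_le_mul_of_nonneg_left h2 (by positivity)
      _ = c * r ^ (y + ε / 2) := by field_simp
      _ ≤ (μ (Metric.ball x r)).toReal := h1
  obtain ⟨c₁, hc₁, h₁⟩ := hlower
  obtain ⟨c₂, hc₂, h₂⟩ := hupper
  exact ⟨c₁, hc₁, c₂, hc₂, fun r hr => ⟨h₁ r hr, h₂ r hr⟩⟩
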